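/- arXiv:1508.00386 — 6 statements merged into one kernel-verified Lean document; each statement's English description precedes it below -/
import Mathlib

section
/- Let n ≥ 3, p = 2, and let b satisfy n^2/(h*+1) < b ≤ n^2/h* where h* = ⌊n^2/b⌋ and 1 ≤ h* < n-1. Then δ* = (n + √((b(h*+1) - n^2)/h*))/(h*+1) is the unique root in the interval (n/(h*+1), n/h*] of the equation h*·δ^2 + (n - h*·δ)^2 = b. -/
theorem deltaStar_unique_root (n : ℕ) (hn : 3 ≤ n) (b : ℝ) (h : ℕ)
    (hh : h = ⌊(n : ℝ) ^ 2 / b⌋₊) (hh1 : 1 ≤ h) (hh2 : h < n - 1)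
    (hb1 : (n : ℝ) ^ 2 / ((h : ℝ) + 1) < b) (hb2 : b ≤ (n : ℝ) ^ 2 / (h : ℝ)) :
    let δstar : ℝ := ((n : ℝ) + Real.sqrt ((b * ((h : ℝ) + 1) - (n : ℝ) ^ 2) / h)) / ((h : ℝ) + 1)
    δstar ∈ Set.Ioc ((n : ℝ) / ((h : ℝ) + 1)) ((n : ℝ) / h) ∧
      (h : ℝ) * δstar ^ 2 + ((n : ℝ) - (h : ℝ) * δstar) ^ 2 = b ∧
      ∀ δ ∈ Set.Ioc ((n : ℝ) / ((h : ℝ) + 1)) ((n : ℝ) / h),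
        (h : ℝ) * δ ^ 2 + ((n : ℝ) - (h : ℝ) * δ) ^ 2 = b → δ = δstar := by
  intro δstar
  set H : ℝ := (h : ℝ) with hHdef
  have hH1le : (1 : ℝ) ≤ H := by rw [hHdef]; exact_mod_cast hh1
  have hHpos : (0 : ℝ) < H := by linarith
  have hH1 : (0 : ℝ) < H + 1 := by linarith
  have hnpos : (0 : ℝ) < n := by
    have : (3 : ℝ) ≤ (n : ℝ) := by exact_mod_cast hn
    linarith
  have hbn : (n : ℝ) ^ 2 < b * (H + 1) := by
    rw [div_lt_iff₀ hH1] at hb1; linarith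
  have hbn2 : H * b ≤ (n : ℝ) ^ 2 := by
    rw [le_div_iff₀ hHpos] at hb2; linarith
  set s : ℝ := Real.sqrt ((b * (H + 1) - (n : ℝ) ^ 2) / H) with hsdef
  have harg : 0 < (b * (H + 1) - (n : ℝ) ^ 2) / H := div_pos (by linarith) hHpos
  have hspos : 0 < s := Real.sqrt_pos.mpr harg
  have hs2 : H * s ^ 2 = b * (H + 1) - (n : ℝ) ^ 2 := by
    rw [hsdef, Real.sq_sqrt harg.le]
    field_simp
  have hδ : δstar = ((n : ℝ) + s) / (H + 1) := rfl
  have hsn : H * s ≤ (n : ℝ) := by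
    nlinarith [hs2, hbn2, hspos, hHpos, hnpos, sq_nonneg (H * s - n), sq_nonneg (H * s + n)]
  refine ⟨⟨?_, ?_⟩, ?_, ?_⟩
  · rw [hδ, div_lt_div_iff₀ hH1 hH1]
    nlinarith [hspos]
  · rw [hδ, div_le_div_iff₀ hH1 hHpos]
    nlinarith [hsn]
  · rw [hδ]
    field_simp
    ring_nf
    nlinarith [hs2]
  · rintro δ ⟨hδ1, hδ2⟩ heq
    have key : H * (((H + 1) * δ - ((n : ℝ) + s)) * ((H + 1) * δ - ((n : ℝ) - s))) = 0 := by
      linear_combination (H + 1) * heq - hs2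
    rcases mul_eq_zero.mp key with h0 | h0
    · exact absurd h0 hHpos.ne'
    rcases mul_eq_zero.mp h0 with h1 | h1
    · rw [hδ, eq_div_iff hH1.ne']
      linarith
    · exfalso
      rw [div_lt_iff₀ hH1, mul_comm] at hδ1
      linarith [hspos]
end

section
/- Let λ ∈ ℝ^{n-1} satisfy λ_1 ≥ λ_2 ≥ ... ≥ λ_{n-1} ≥ 0, ∑_{i=1}^{n-1} λ_i = n and ∑_{i=1}^{n-1} λ_i^2 = b, where n^2/(h*+1) < b ≤ n^2/h* and h* = ⌊n^2/b⌋ with 1 ≤ h* < n-1. Then λ_1 ≥ (n + √((b(h*+1) - n^2)/h*))/(h*+1). -/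
set_option maxHeartbeats 1000000


open Finset

lemma tent_bound {ι : Type*} (t : ℝ) (ht : 0 < t) (s : Finset ι) (f : ι → ℝ)
    (hf : ∀ i ∈ s, 0 ≤ f i ∧ f i ≤ t) :
    ∃ c : ℝ, 0 ≤ c ∧ c ≤ t ∧ (∃ k : ℤ, ∑ i ∈ s, f i = c + k * t) ∧
      c * (t - c) ≤ ∑ i ∈ s, f i * (t - f i) := by
  induction s using Finset.cons_induction with
  | empty => exact ⟨0, le_refl 0, ht.le, ⟨0, by simp⟩, by simp⟩
  | cons a s ha ih =>
    obtain ⟨c, hc0, hct, ⟨k, hk⟩, hg⟩ :=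
      ih (fun i hi => hf i (Finset.mem_cons.mpr (Or.inr hi)))
    obtain ⟨ha0, hat⟩ := hf a (Finset.mem_cons_self a s)
    rw [Finset.sum_cons, Finset.sum_cons]
    by_cases hca : f a + c ≤ t
    · refine ⟨f a + c, by linarith, hca, ⟨k, by rw [hk]; ring⟩, ?_⟩
      nlinarith [mul_nonneg ha0 hc0]
    · refine ⟨f a + c - t, by linarith, by linarith, ⟨k + 1, by rw [hk]; push_cast; ring⟩, ?_⟩
      nlinarith [mul_nonneg (sub_nonneg.mpr hat) (sub_nonneg.mpr hct)]

theorem lambda_one_lower_bound (n : ℕ) (hn : 3 ≤ n) (b : ℝ) (lam : Fin (n - 1) → ℝ)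
    (hanti : Antitone lam) (hnonneg : ∀ i, 0 ≤ lam i)
    (hsum : (∑ i, lam i) = n) (hsumsq : (∑ i, lam i ^ 2) = b)
    (h : ℕ) (hh : h = ⌊(n : ℝ) ^ 2 / b⌋₊) (hh1 : 1 ≤ h) (hh2 : h < n - 1)
    (hb1 : (n : ℝ) ^ 2 / ((h : ℝ) + 1) < b) (hb2 : b ≤ (n : ℝ) ^ 2 / (h : ℝ)) :
    lam ⟨0, by omega⟩ ≥
      ((n : ℝ) + Real.sqrt ((b * ((h : ℝ) + 1) - (n : ℝ) ^ 2) / h)) / ((h : ℝ) + 1) := by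
  have hn0 : (0:ℝ) < n := by positivity
  have hh0 : (1:ℝ) ≤ (h:ℝ) := by exact_mod_cast hh1
  have hhpos : (0:ℝ) < h := by linarith
  have hh1pos : (0:ℝ) < (h:ℝ) + 1 := by linarith
  set t := lam ⟨0, by omega⟩ with htdef
  have hlt : ∀ i, lam i ≤ t := fun i => hanti (by simp [Fin.le_def])
  have hbpos : 0 < b := lt_trans (by positivity) hb1
  -- b ≤ t * n
  have hbtn : b ≤ t * n := by
    calc b = ∑ i, lam i ^ 2 := hsumsq.symm
    _ ≤ ∑ i, t * lam i := by
        apply Finset.sum_le_sum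
        intro i _
        have := hnonneg i
        have := hlt i
        nlinarith
    _ = t * n := by rw [← Finset.mul_sum, hsum]
  -- t > n/(h+1)
  have htlb : (n:ℝ) / ((h:ℝ) + 1) < t := by
    rw [div_lt_iff₀ hh1pos]
    rw [div_lt_iff₀ hh1pos] at hb1
    nlinarith
  have htpos : 0 < t := lt_trans (by positivity) htlb
  set D : ℝ := (b * ((h:ℝ) + 1) - (n:ℝ)^2) / h with hD
  have hDpos : 0 < D := by
    apply div_pos _ hhpos
    rw [div_lt_iff₀ hh1pos] at hb1
    nlinarith
  set s := Real.sqrt D with hs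
  have hs0 : 0 < s := Real.sqrt_pos.mpr hDpos
  have hs2 : s ^ 2 = D := Real.sq_sqrt hDpos.le
  have hs2h : (h:ℝ) * s ^ 2 = b * ((h:ℝ) + 1) - (n:ℝ)^2 := by
    rw [hs2, hD]; field_simp
  -- s ≤ n / h
  have hsle : s ≤ (n:ℝ) / h := by
    rw [hs]
    rw [show (n:ℝ)/(h:ℝ) = Real.sqrt (((n:ℝ)/h)^2) from
      (Real.sqrt_sq (by positivity)).symm]
    apply Real.sqrt_le_sqrt
    rw [hD, div_pow, div_le_div_iff₀ hhpos (by positivity)]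
    rw [le_div_iff₀ hhpos] at hb2
    nlinarith
  have htarget_le : ((n:ℝ) + s) / ((h:ℝ) + 1) ≤ (n:ℝ) / h := by
    rw [div_le_div_iff₀ hh1pos hhpos]
    have := (le_div_iff₀ hhpos).mp hsle
    nlinarith
  rw [ge_iff_le]
  by_cases hcase : (n:ℝ) / h ≤ t
  · linarith
  push_neg at hcase
  -- main case: t < n/h, so 0 < r := n - h t < t
  have hr0 : 0 < (n:ℝ) - h * t := by
    rw [lt_div_iff₀ hhpos] at hcase; linarith
  have hrt : (n:ℝ) - h * t < t := by
    rw [div_lt_iff₀ hh1pos] at htlb; linarith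
  obtain ⟨c, hc0, hct, ⟨k, hk⟩, hg⟩ := tent_bound t htpos Finset.univ lam
    (fun i _ => ⟨hnonneg i, hlt i⟩)
  rw [hsum] at hk
  -- identify c = n - h t
  have hck : c = (n:ℝ) - h * t := by
    have hkh : k = (h:ℤ) := by
      by_contra hne
      have h1 : (1:ℝ) ≤ |(k:ℝ) - (h:ℝ)| := by
        have hcast : (k:ℝ) - (h:ℝ) = ((k - (h:ℤ) : ℤ) : ℝ) := by push_cast; ring
        rw [hcast, ← Int.cast_abs]
        exact_mod_cast Int.one_le_abs (sub_ne_zero.mpr hne)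
      have h2 : |(k:ℝ) - (h:ℝ)| * t < t := by
        rcases abs_cases ((k:ℝ) - (h:ℝ)) with ⟨he, _⟩ | ⟨he, _⟩ <;> rw [he] <;> nlinarith
      nlinarith
    rw [hk, hkh]; push_cast; ring
  -- sum of lam*(t-lam) = t*n - b
  have hsumtent : ∑ i, lam i * (t - lam i) = t * n - b := by
    have : ∀ i : Fin (n-1), lam i * (t - lam i) = t * lam i - lam i ^ 2 := by
      intro i; ring
    rw [Finset.sum_congr rfl (fun i _ => this i), Finset.sum_sub_distrib,
      ← Finset.mul_sum, hsum, hsumsq]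
  rw [hck, hsumtent] at hg
  -- quadratic inequality: h(h+1)t² - 2nht + n² - b ≥ 0
  have hq : 0 ≤ (h:ℝ) * ((h:ℝ)+1) * t^2 - 2 * n * h * t + (n:ℝ)^2 - b := by
    nlinarith
  -- conclude t ≥ (n+s)/(h+1)
  by_contra hcon
  push_neg at hcon
  have hA : (0:ℝ) < t * ((h:ℝ)+1) - n := by
    rw [div_lt_iff₀ hh1pos] at htlb; linarith
  have hB : (0:ℝ) < (n:ℝ) + s - t * ((h:ℝ)+1) := by
    rw [lt_div_iff₀ hh1pos] at hcon; linarith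
  nlinarith [mul_pos hB (show (0:ℝ) < t * ((h:ℝ)+1) - n + s by linarith), hhpos, hq, hs2h]
end

section
/- Let n ≥ 4 and let λ ∈ ℝ^{n-1} satisfy λ_1 ≥ λ_2 ≥ ... ≥ λ_{n-1} ≥ 0, ∑_{i=1}^{n-1} λ_i = n and ∑_{i=1}^{n-1} λ_i^2 = b, where n^2/(n-1) < b < 2n. Then λ_2 ≥ (n - √((b(n-1) - n^2)/(n-2)))/(n-1). -/
open Finset

set_option maxHeartbeats 1000000 in
theorem lambda_two_lower_bound (n : ℕ) (hn : 4 ≤ n) (b : ℝ) (lam : Fin (n - 1) → ℝ)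
    (hanti : Antitone lam) (hnonneg : ∀ i, 0 ≤ lam i)
    (hsum : (∑ i, lam i) = n) (hsumsq : (∑ i, lam i ^ 2) = b)
    (hb1 : (n : ℝ) ^ 2 / ((n : ℝ) - 1) < b) (hb2 : b < 2 * n) :
    lam ⟨1, by omega⟩ ≥
      ((n : ℝ) - Real.sqrt ((b * ((n : ℝ) - 1) - (n : ℝ) ^ 2) / ((n : ℝ) - 2))) / ((n : ℝ) - 1) := by
  have hN : (4:ℝ) ≤ (n:ℝ) := by exact_mod_cast hn
  have hn1 : (0:ℝ) < (n:ℝ) - 1 := by linarith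
  have hn2 : (0:ℝ) < (n:ℝ) - 2 := by linarith
  set i0 : Fin (n-1) := ⟨0, by omega⟩ with hi0
  set i1 : Fin (n-1) := ⟨1, by omega⟩ with hi1
  set t := lam i1 with ht
  have hDpos : 0 < (b * ((n:ℝ) - 1) - (n:ℝ)^2) / ((n:ℝ) - 2) := by
    apply div_pos _ hn2
    rw [div_lt_iff₀ hn1] at hb1
    linarith
  set s := Real.sqrt ((b * ((n:ℝ) - 1) - (n:ℝ)^2) / ((n:ℝ) - 2)) with hs
  have hs0 : 0 ≤ s := Real.sqrt_nonneg _
  have hs2 : s^2 = (b * ((n:ℝ) - 1) - (n:ℝ)^2) / ((n:ℝ) - 2) := Real.sq_sqrt hDpos.le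
  by_contra hcon
  push_neg at hcon
  rw [lt_div_iff₀ hn1] at hcon
  -- hcon : lam i1 * (n - 1) < n - s
  have htn : t * ((n:ℝ)-1) < (n:ℝ) - s := hcon
  have hgt : s < (n:ℝ) - ((n:ℝ)-1)*t := by linarith
  -- sums split
  have hmem : i0 ∈ (univ : Finset (Fin (n-1))) := mem_univ _
  have hsum' : lam i0 + ∑ i ∈ univ.erase i0, lam i = (n:ℝ) := by
    rw [← hsum, ← Finset.add_sum_erase _ _ hmem]
  have hsumsq' : lam i0 ^ 2 + ∑ i ∈ univ.erase i0, lam i ^ 2 = b := by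
    rw [← hsumsq, ← Finset.add_sum_erase _ _ hmem]
  have hcard : ((univ.erase i0).card : ℝ) = (n:ℝ) - 2 := by
    rw [Finset.card_erase_of_mem hmem, Finset.card_univ, Fintype.card_fin]
    have h : n - 1 - 1 = n - 2 := by omega
    rw [h, Nat.cast_sub (by omega : 2 ≤ n)]
    norm_num
  have hle : ∀ i ∈ univ.erase i0, lam i ≤ t := by
    intro i hi
    have hne : i ≠ i0 := (Finset.mem_erase.mp hi).1
    have hv : (i:ℕ) ≠ 0 := by
      intro h
      exact hne (Fin.ext (by simp [hi0, h]))
    apply hanti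
    show i1 ≤ i
    rw [Fin.le_def]
    simp only [hi1]
    omega
  have hS_le : ∑ i ∈ univ.erase i0, lam i ≤ ((n:ℝ) - 2) * t := by
    calc ∑ i ∈ univ.erase i0, lam i ≤ ∑ _i ∈ univ.erase i0, t := Finset.sum_le_sum hle
    _ = ((n:ℝ) - 2) * t := by rw [Finset.sum_const, nsmul_eq_mul, hcard]
  have hCS : (∑ i ∈ univ.erase i0, lam i)^2 ≤ ((n:ℝ) - 2) * ∑ i ∈ univ.erase i0, lam i ^ 2 := by
    have h := sq_sum_le_card_mul_sum_sq (s := univ.erase i0) (f := lam)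
    calc (∑ i ∈ univ.erase i0, lam i)^2
        ≤ ((univ.erase i0).card : ℝ) * ∑ i ∈ univ.erase i0, lam i ^ 2 := by exact_mod_cast h
      _ = ((n:ℝ) - 2) * ∑ i ∈ univ.erase i0, lam i ^ 2 := by rw [hcard]
  have ht0 : 0 ≤ t := hnonneg i1
  set L := lam i0 with hL
  set S := (∑ i ∈ univ.erase i0, lam i) with hSdef
  have hS0 : 0 ≤ S := Finset.sum_nonneg fun i _ => hnonneg i
  have hQ : S^2 ≤ ((n:ℝ) - 2) * (b - L^2) := by
    have h : ∑ i ∈ univ.erase i0, lam i ^ 2 = b - L^2 := by linarith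
    rw [← h]; exact hCS
  have hLS : L = (n:ℝ) - S := by linarith
  have hu : 0 ≤ ((n:ℝ)-2)*t - S := by linarith
  -- bracket nonneg
  have hbr : 0 ≤ ((n:ℝ)-2)*(2*(n:ℝ) - S - ((n:ℝ)-2)*t) - (S + ((n:ℝ)-2)*t) := by
    nlinarith [mul_nonneg hn1.le hu, mul_pos hn2 (show 0 < (n:ℝ) - ((n:ℝ)-1)*t by linarith)]
  -- key inequality
  have hQ' : S^2 ≤ ((n:ℝ) - 2) * (b - ((n:ℝ) - S)^2) := by rw [← hLS]; exact hQ
  have hkey : ((n:ℝ)-2) * ((n:ℝ) - ((n:ℝ)-2)*t)^2 + (((n:ℝ)-2)*t)^2 ≤ b * ((n:ℝ)-2) := by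
    nlinarith [hQ', mul_nonneg hu hbr]
  have hkey2 : ((n:ℝ) - ((n:ℝ)-2)*t)^2 + ((n:ℝ)-2)*t^2 ≤ b :=
    le_of_mul_le_mul_right
      (by nlinarith [hkey] :
        (((n:ℝ) - ((n:ℝ)-2)*t)^2 + ((n:ℝ)-2)*t^2) * ((n:ℝ)-2) ≤ b * ((n:ℝ)-2)) hn2
  have hs2' : s^2 * ((n:ℝ)-2) = b * ((n:ℝ)-1) - (n:ℝ)^2 := by
    rw [hs2]; field_simp
  have h1' := mul_le_mul_of_nonneg_left hkey2 hn1.le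
  have h1 : ((n:ℝ)-2)*((n:ℝ)-((n:ℝ)-1)*t)^2 ≤ b*((n:ℝ)-1) - (n:ℝ)^2 := by
    linarith only [h1']
  have hsq : s^2 < ((n:ℝ)-((n:ℝ)-1)*t)^2 := by
    have hp : 0 < ((n:ℝ)-((n:ℝ)-1)*t - s) * ((n:ℝ)-((n:ℝ)-1)*t + s) :=
      mul_pos (by linarith) (by linarith)
    linarith only [hp]
  have h2 : ((n:ℝ)-2)*s^2 < ((n:ℝ)-2)*((n:ℝ)-((n:ℝ)-1)*t)^2 :=
    mul_lt_mul_of_pos_left hsq hn2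
  linarith only [hs2', h1, h2]
end

section
/- For a simple connected graph G on n ≥ 3 vertices with normalized Laplacian eigenvalues λ_1 ≥ ... ≥ λ_{n-1} > λ_n = 0, and any θ with λ_1 ≥ θ and n/(n-1) ≤ θ: if α < 0 or α > 1 then ∑_{i=1}^{n-1} λ_i^α ≥ θ^α + (n-θ)^α/(n-2)^{α-1}. -/
/-!
Put `v = (n - θ) / (n - 2)`. The eigenvalues sum to the trace `n` (connectivity makes every degree
positive, so every diagonal entry of the normalized Laplacian is `1`), hence the `n - 2` positive
eigenvalues other than `λ₁` sum to `n - λ₁ = (n - 2) v + θ - λ₁`, and `θ ≥ n / (n - 1)` means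
exactly `v ≤ θ`. For `α ∉ (0, 1)` the function `φ x = x ^ α` is convex on `(0, ∞)`; bound `φ λ₁`
below by the tangent line of `φ` at `θ` and every other `φ λᵢ` by the tangent line at `v`.
Summing, the linear terms leave `(φ' θ - φ' v) (λ₁ - θ)`, which is nonnegative as `φ'` is monotone.
-/

open Matrix Finset

/-- The normalized Laplacian `D^{-1/2} (D - A) D^{-1/2}` of a simple graph. -/
noncomputable def normLap {n : ℕ} (G : SimpleGraph (Fin n)) [DecidableRel G.Adj] :
    Matrix (Fin n) (Fin n) ℝ :=
  let Dinvhalf : Matrix (Fin n) (Fin n) ℝ :=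
    Matrix.diagonal fun i => (Real.sqrt (G.degree i))⁻¹
  Dinvhalf * (Matrix.diagonal (fun i => (G.degree i : ℝ)) - G.adjMatrix ℝ) * Dinvhalf

namespace ConvexOn

variable {S : Set ℝ} {f : ℝ → ℝ} {x y : ℝ}

theorem add_deriv_mul_sub_le (hf : ConvexOn ℝ S f) (hx : x ∈ S) (hy : y ∈ S)
    (hfx : DifferentiableAt ℝ f x) : f x + deriv f x * (y - x) ≤ f y := by
  rcases lt_trichotomy x y with hxy | rfl | hyx
  · have := hf.deriv_le_slope hx hy hxy hfx
    rw [slope_def_field, le_div_iff₀ (sub_pos.2 hxy)] at this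
    linarith
  · simp
  · have := hf.slope_le_deriv hy hx hyx hfx
    rw [slope_def_field, div_le_iff₀ (sub_pos.2 hyx)] at this
    linarith

theorem deriv_le_deriv (hf : ConvexOn ℝ S f) (hx : x ∈ S) (hy : y ∈ S) (hxy : x ≤ y)
    (hfx : DifferentiableAt ℝ f x) (hfy : DifferentiableAt ℝ f y) : deriv f x ≤ deriv f y := by
  rcases hxy.eq_or_lt with rfl | hxy
  · rfl
  · exact (hf.deriv_le_slope hx hy hxy hfx).trans (hf.slope_le_deriv hx hy hxy hfy)

theorem add_card_mul_le_add_sum {ι : Type*} (hf : ConvexOn ℝ S f) {s : Finset ι} {x : ι → ℝ}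
    {a θ v : ℝ} (hxS : ∀ i ∈ s, x i ∈ S) (ha : a ∈ S) (hθ : θ ∈ S) (hv : v ∈ S)
    (hfθ : DifferentiableAt ℝ f θ) (hfv : DifferentiableAt ℝ f v) (hvθ : v ≤ θ)
    (hθa : θ ≤ a) (hsum : a + ∑ i ∈ s, x i = θ + #s * v) :
    f θ + #s * f v ≤ f a + ∑ i ∈ s, f (x i) := by
  have htop := hf.add_deriv_mul_sub_le hθ ha hfθ
  have hrest : ∑ i ∈ s, (f v + deriv f v * (x i - v)) ≤ ∑ i ∈ s, f (x i) :=
    sum_le_sum fun i hi ↦ hf.add_deriv_mul_sub_le hv (hxS i hi) hfv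
  have hrest_eq : ∑ i ∈ s, (f v + deriv f v * (x i - v)) = #s * f v + deriv f v * (θ - a) := by
    rw [sum_add_distrib, ← mul_sum, sum_sub_distrib, sum_const, sum_const, nsmul_eq_mul,
      nsmul_eq_mul]
    linear_combination deriv f v * hsum
  have hmono : 0 ≤ (deriv f θ - deriv f v) * (a - θ) :=
    mul_nonneg (sub_nonneg.2 (hf.deriv_le_deriv hv hθ hvθ hfv hfθ)) (sub_nonneg.2 hθa)
  linarith

end ConvexOn

theorem convexOn_rpow_of_nonpos {p : ℝ} (hp : p ≤ 0) :
    ConvexOn ℝ (Set.Ioi 0) fun x : ℝ ↦ x ^ p := by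
  refine MonotoneOn.convexOn_of_deriv (convex_Ioi 0) ?_ ?_ ?_
  · exact fun x hx ↦ (Real.continuousAt_rpow_const x p (Or.inl (ne_of_gt hx))).continuousWithinAt
  · rw [interior_Ioi]
    exact fun x hx ↦ (Real.differentiableAt_rpow_const_of_ne p (ne_of_gt hx)).differentiableWithinAt
  · rw [interior_Ioi]
    intro x hx y hy hxy
    simp only [Real.deriv_rpow_const]
    exact mul_le_mul_of_nonpos_left (Real.rpow_le_rpow_of_nonpos hx hxy (by linarith)) hp

theorem convexOn_rpow_Ioi {p : ℝ} (hp : p ≤ 0 ∨ 1 ≤ p) :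
    ConvexOn ℝ (Set.Ioi 0) fun x : ℝ ↦ x ^ p :=
  hp.elim convexOn_rpow_of_nonpos fun hp ↦
    (convexOn_rpow hp).subset Set.Ioi_subset_Ici_self (convex_Ioi 0)

theorem rpow_add_rpow_div_le_sum_rpow {ι : Type*} {s : Finset ι} {x : ι → ℝ} {i₀ : ι} {θ α : ℝ}
    (hα : α ≤ 0 ∨ 1 ≤ α) (hs : 1 < #s) (hx : ∀ i ∈ s, 0 < x i) (hi₀ : i₀ ∈ s) (hθ : θ ≤ x i₀)
    (hmean : (∑ i ∈ s, x i) / #s ≤ θ) :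
    θ ^ α + (∑ i ∈ s, x i - θ) ^ α / (#s - 1 : ℝ) ^ (α - 1) ≤ ∑ i ∈ s, x i ^ α := by
  classical
  set T := s.erase i₀
  have hcardT : (#T : ℝ) = #s - 1 := by
    rw [card_erase_of_mem hi₀, Nat.cast_sub (by omega), Nat.cast_one]
  have hT_pos : 0 < (#T : ℝ) := by rw [hcardT]; exact sub_pos.2 (by exact_mod_cast hs)
  have hsumT : x i₀ + ∑ i ∈ T, x i = ∑ i ∈ s, x i := add_sum_erase _ _ hi₀
  have hsumT_pos : 0 < ∑ i ∈ T, x i :=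
    sum_pos (fun i hi ↦ hx i (mem_of_mem_erase hi)) (card_pos.1 (by exact_mod_cast hT_pos))
  have hθ_pos : 0 < θ := (div_pos (by linarith [hx i₀ hi₀]) (by linarith)).trans_le hmean
  set v := (∑ i ∈ s, x i - θ) / #T
  have hv_pos : 0 < v := div_pos (by linarith) hT_pos
  have hvθ : v ≤ θ := by
    rw [div_le_iff₀ hT_pos, hcardT]
    rw [div_le_iff₀ (by linarith)] at hmean
    linarith
  have key := (convexOn_rpow_Ioi hα).add_card_mul_le_add_sum
    (fun i hi ↦ hx i (mem_of_mem_erase hi)) (hx i₀ hi₀) hθ_pos hv_pos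
    (Real.differentiableAt_rpow_const_of_ne α hθ_pos.ne')
    (Real.differentiableAt_rpow_const_of_ne α hv_pos.ne') hvθ hθ
    (by rw [hsumT, mul_div_cancel₀ _ hT_pos.ne']; ring)
  have hsplit : (∑ i ∈ s, x i - θ) ^ α / (#T : ℝ) ^ (α - 1) = #T * v ^ α := by
    rw [Real.div_rpow (by linarith) hT_pos.le, Real.rpow_sub_one hT_pos.ne']
    field_simp
  rw [← hcardT, hsplit, ← add_sum_erase _ _ hi₀]
  exact key

theorem trace_normLap {n : ℕ} (G : SimpleGraph (Fin n)) [DecidableRel G.Adj]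
    (hdeg : ∀ i, 0 < G.degree i) : (normLap G).trace = n := by
  have hdiag : ∀ i, normLap G i i = 1 := fun i ↦ by
    have hd : (0 : ℝ) < G.degree i := by exact_mod_cast hdeg i
    simp only [normLap, mul_diagonal, diagonal_mul, Matrix.sub_apply, diagonal_apply_eq,
      SimpleGraph.adjMatrix_apply, G.irrefl, if_false, sub_zero]
    rw [mul_right_comm, ← mul_inv, Real.mul_self_sqrt hd.le, inv_mul_cancel₀ hd.ne']
  simp [Matrix.trace, hdiag]

theorem sum_eigenvalues_normLap {n : ℕ} (G : SimpleGraph (Fin n)) [DecidableRel G.Adj]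
    (hdeg : ∀ i, 0 < G.degree i) (hH : (normLap G).IsHermitian) :
    ∑ i, hH.eigenvalues i = n := by
  simpa [trace_normLap G hdeg] using hH.trace_eq_sum_eigenvalues.symm

theorem sAlpha_lower_bound {n : ℕ} (hn : 3 ≤ n) (G : SimpleGraph (Fin n)) [DecidableRel G.Adj]
    (hG : G.Connected) (hH : (normLap G).IsHermitian)
    (lam : Fin n → ℝ) (hanti : Antitone lam)
    (hperm : ∃ σ : Equiv.Perm (Fin n), lam = hH.eigenvalues ∘ σ)
    (hlast : lam ⟨n - 1, by omega⟩ = 0) (hpos : lam ⟨n - 2, by omega⟩ > 0)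
    (θ α : ℝ) (hθ1 : lam ⟨0, by omega⟩ ≥ θ) (hθ2 : (n : ℝ) / ((n : ℝ) - 1) ≤ θ)
    (hα : α < 0 ∨ 1 < α) :
    (∑ i ∈ Finset.univ.filter (fun i : Fin n => (i : ℕ) < n - 1), lam i ^ α) ≥
      θ ^ α + ((n : ℝ) - θ) ^ α / ((n : ℝ) - 2) ^ (α - 1) := by
  have : Nontrivial (Fin n) := Fin.nontrivial_iff_two_le.2 (by omega)
  set S := univ.filter fun i : Fin n => (i : ℕ) < n - 1
  have hsumS : ∑ i ∈ S, lam i = n := by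
    obtain ⟨σ, hσ⟩ := hperm
    rw [sum_filter_of_ne fun i _ hi ↦ ?_, hσ, Function.comp_def, Equiv.sum_comp σ hH.eigenvalues,
      sum_eigenvalues_normLap G (fun i ↦ hG.preconnected.degree_pos_of_nontrivial i) hH]
    refine lt_of_le_of_ne (Nat.le_pred_of_lt i.2) fun h ↦ hi ?_
    rwa [show i = ⟨n - 1, by omega⟩ from Fin.ext h]
  have hcardS : (#S : ℝ) = n - 1 := by
    rw [Fin.card_filter_val_lt, min_eq_right (by omega), Nat.cast_sub (by omega), Nat.cast_one]
  have hS_pos : ∀ i ∈ S, 0 < lam i := fun i hi ↦ by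
    simp only [S, mem_filter, mem_univ, true_and] at hi
    exact hpos.trans_le (hanti (show (i : ℕ) ≤ n - 2 by omega))
  have htop : (⟨0, by omega⟩ : Fin n) ∈ S := by
    simp only [S, mem_filter, mem_univ, true_and]
    omega
  have bound := rpow_add_rpow_div_le_sum_rpow (hα.imp le_of_lt le_of_lt)
    (by rw [Fin.card_filter_val_lt]; omega) hS_pos htop hθ1 (by rwa [hsumS, hcardS])
  rw [hsumS, hcardS, sub_sub, one_add_one_eq_two] at bound
  exact bound
end

section
/- Let n ≥ 3 and let b satisfy n^2/(n-1) < b < 2n, with h* = ⌊n^2/b⌋ (so 1 ≤ h* < n-1). Define Q = (n + √((b(h*+1) - n^2)/h*))/(h*+1) and P = 1 + √((b-n)/(n(n-1))). Then Q ≥ P. -/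
/-!
Write `b = n + n(n-1)t²` with `t ≥ 0`, so that `P = 1 + t`. Then `Q ≥ P` says
`(h+1)(1+t) - n ≤ √((b(h+1) - n²)/h)`. When the left side `x = (h+1)t - (n-h-1)` is nonnegative,
squaring reduces this to `h x² ≤ b(h+1) - n²`, and the difference of the two sides, times `h+1`,
factors as `(n-h-1)(x((n+h)(x + 2(n-h-1)) + 2h(h+1)) + (n-h-2)n²)`, nonnegative for `h ≤ n-2`.
-/

open Real

noncomputable def majorizationBound (n b h : ℝ) : ℝ :=
  (n + √((b * (h + 1) - n ^ 2) / h)) / (h + 1)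

noncomputable def bozkurtBound (n b : ℝ) : ℝ :=
  1 + √((b - n) / (n * (n - 1)))

section

variable {n h t : ℝ}

lemma mul_sq_le_of_le_sub_two (hh : 0 ≤ h) (hhn : h + 2 ≤ n)
    (hx : 0 ≤ (h + 1) * t - (n - h - 1)) :
    h * ((h + 1) * t - (n - h - 1)) ^ 2 ≤ (n + n * (n - 1) * t ^ 2) * (h + 1) - n ^ 2 := by
  set x := (h + 1) * t - (n - h - 1) with hx_def
  have factor : ((n + n * (n - 1) * t ^ 2) * (h + 1) - n ^ 2 - h * x ^ 2) * (h + 1) =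
      (n - h - 1) * (x * ((n + h) * (x + 2 * (n - h - 1)) + 2 * h * (h + 1))
        + (n - h - 2) * n ^ 2) := by
    rw [hx_def]; ring
  have factor_nonneg : 0 ≤ (n - h - 1) * (x * ((n + h) * (x + 2 * (n - h - 1)) + 2 * h * (h + 1))
      + (n - h - 2) * n ^ 2) := by
    have : 0 ≤ (n + h) * (x + 2 * (n - h - 1)) + 2 * h * (h + 1) := by
      have : 0 ≤ (n + h) * (x + 2 * (n - h - 1)) := mul_nonneg (by linarith) (by linarith)
      positivity
    have : 0 ≤ (n - h - 2) * n ^ 2 := mul_nonneg (by linarith) (sq_nonneg n)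
    have : 0 ≤ n - h - 1 := by linarith
    positivity
  rw [← factor] at factor_nonneg
  linarith [(mul_nonneg_iff_of_pos_right (by linarith : 0 < h + 1)).mp factor_nonneg]

lemma mul_one_add_le_add_sqrt (hh : 0 < h) (hhn : h + 2 ≤ n) :
    (h + 1) * (1 + t) ≤ n + √(((n + n * (n - 1) * t ^ 2) * (h + 1) - n ^ 2) / h) := by
  rcases le_total ((h + 1) * t - (n - h - 1)) 0 with hx | hx
  · linarith [sqrt_nonneg (((n + n * (n - 1) * t ^ 2) * (h + 1) - n ^ 2) / h)]
  · have : (h + 1) * t - (n - h - 1) ≤ √(((n + n * (n - 1) * t ^ 2) * (h + 1) - n ^ 2) / h) := by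
      apply le_sqrt_of_sq_le
      rw [le_div_iff₀ hh, mul_comm]
      exact mul_sq_le_of_le_sub_two hh.le hhn hx
    linarith

end

lemma add_mul_sq_sqrt_sub_div {n b : ℝ} (hn : 1 < n) (hb : n ≤ b) :
    n + n * (n - 1) * √((b - n) / (n * (n - 1))) ^ 2 = b := by
  have : 0 < n * (n - 1) := by nlinarith
  rw [sq_sqrt (div_nonneg (by linarith) this.le), mul_div_cancel₀ _ this.ne']
  ring

theorem bozkurtBound_le_majorizationBound {n b h : ℝ} (hh : 0 < h) (hhn : h + 2 ≤ n)
    (hb : n ≤ b) : bozkurtBound n b ≤ majorizationBound n b h := by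
  have key := mul_one_add_le_add_sqrt (t := √((b - n) / (n * (n - 1)))) hh hhn
  rw [add_mul_sq_sqrt_sub_div (by linarith) hb] at key
  rw [majorizationBound, le_div_iff₀ (by linarith), mul_comm]
  exact key

theorem Q_ge_P_general (n : ℕ) (b : ℝ)
    (hb1 : (n : ℝ) ^ 2 / ((n : ℝ) - 1) < b)
    (h : ℕ) (hh1 : 1 ≤ h) (hh2 : h < n - 1) :
    ((n : ℝ) + Real.sqrt ((b * ((h : ℝ) + 1) - (n : ℝ) ^ 2) / h)) / ((h : ℝ) + 1) ≥
      1 + Real.sqrt ((b - n) / ((n : ℝ) * ((n : ℝ) - 1))) := by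
  have hhn : (h : ℝ) + 2 ≤ n := by exact_mod_cast (by omega : h + 2 ≤ n)
  have hh : (0 : ℝ) < h := by exact_mod_cast hh1
  have hn : (0 : ℝ) < n - 1 := by linarith
  have hb : (n : ℝ) ≤ b := by
    rw [div_lt_iff₀ hn] at hb1
    nlinarith
  exact bozkurtBound_le_majorizationBound hh hhn hb

theorem Q_ge_P (n : ℕ) (hn : 3 ≤ n) (b : ℝ)
    (hb1 : (n : ℝ) ^ 2 / ((n : ℝ) - 1) < b) (hb2 : b < 2 * n)
    (h : ℕ) (hh : h = ⌊(n : ℝ) ^ 2 / b⌋₊) (hh1 : 1 ≤ h) (hh2 : h < n - 1) :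
    ((n : ℝ) + Real.sqrt ((b * ((h : ℝ) + 1) - (n : ℝ) ^ 2) / h)) / ((h : ℝ) + 1) ≥
      1 + Real.sqrt ((b - n) / ((n : ℝ) * ((n : ℝ) - 1))) :=
  Q_ge_P_general n b hb1 h hh1 hh2
end

section
/- Let n ≥ 3 and n^2/(n-1) < b ≤ n^2 with h* = ⌊n^2/b⌋, 1 ≤ h* ≤ n-1. The function f(δ) = h*·δ^2 + (n - h*·δ)^2 - b has exactly one root in the interval (n/(h*+1), n/h*]. -/
theorem quadratic_unique_root (n : ℕ) (hn : 3 ≤ n) (b : ℝ)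
    (hb0 : (n : ℝ) ^ 2 / ((n : ℝ) - 1) < b) (hbn : b ≤ (n : ℝ) ^ 2)
    (h : ℕ) (hh : h = ⌊(n : ℝ) ^ 2 / b⌋₊) (hh1 : 1 ≤ h) (hh2 : h ≤ n - 1) :
    ∃! δ : ℝ, δ ∈ Set.Ioc ((n : ℝ) / ((h : ℝ) + 1)) ((n : ℝ) / h) ∧
      (h : ℝ) * δ ^ 2 + ((n : ℝ) - (h : ℝ) * δ) ^ 2 - b = 0 := by
  have hn3 : (3 : ℝ) ≤ (n : ℝ) := by exact_mod_cast hn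
  have hn0 : (0 : ℝ) < n := by linarith
  have hh0 : (0 : ℝ) < h := by exact_mod_cast hh1
  have hb : (0 : ℝ) < b := by
    have : (0 : ℝ) ≤ (n : ℝ) ^ 2 / ((n : ℝ) - 1) :=
      div_nonneg (by positivity) (by linarith)
    linarith
  -- floor facts
  have hfl1 : (h : ℝ) ≤ (n : ℝ) ^ 2 / b := by
    rw [hh]; exact Nat.floor_le (by positivity)
  have hfl2 : (n : ℝ) ^ 2 / b < (h : ℝ) + 1 := by
    rw [hh]; push_cast; exact Nat.lt_floor_add_one _
  have hbl : (n : ℝ) ^ 2 < ((h : ℝ) + 1) * b := by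
    have := (div_lt_iff₀ hb).mp hfl2; linarith
  have hbr : (h : ℝ) * b ≤ (n : ℝ) ^ 2 := by
    have := (le_div_iff₀ hb).mp hfl1; linarith
  set v : ℝ := (n : ℝ) / ((h : ℝ) + 1) with hv
  set w : ℝ := (n : ℝ) / h with hw
  have hvw : v < w := by
    apply div_lt_div_of_pos_left hn0 hh0; linarith
  set f : ℝ → ℝ := fun δ => (h : ℝ) * δ ^ 2 + ((n : ℝ) - (h : ℝ) * δ) ^ 2 - b with hf
  have hfv : f v < 0 := by
    have hne : ((h : ℝ) + 1) ≠ 0 := by positivity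
    have : f v = ((n : ℝ) ^ 2 - ((h : ℝ) + 1) * b) / ((h : ℝ) + 1) := by
      simp only [hf, hv]; field_simp; ring
    rw [this]
    apply div_neg_of_neg_of_pos (by linarith) (by positivity)
  have hfw : 0 ≤ f w := by
    have : f w = ((n : ℝ) ^ 2 - (h : ℝ) * b) / (h : ℝ) := by
      simp only [hf, hw]; field_simp; ring
    rw [this]
    apply div_nonneg (by linarith) (by positivity)
  have hcont : ContinuousOn f (Set.Icc v w) := by
    apply Continuous.continuousOn; fun_prop
  have hiv := intermediate_value_Ioc (le_of_lt hvw) hcont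
  have h0mem : (0 : ℝ) ∈ Set.Ioc (f v) (f w) := ⟨hfv, hfw⟩
  obtain ⟨δ, hδmem, hδroot⟩ := hiv h0mem
  refine ⟨δ, ⟨hδmem, hδroot⟩, ?_⟩
  rintro y ⟨hymem, hyroot⟩
  have hxv : v < δ := hδmem.1
  have hyv : v < y := hymem.1
  have key : (y - δ) * ((h : ℝ) * ((h : ℝ) + 1) * (y + δ) - 2 * (n : ℝ) * (h : ℝ)) = 0 := by
    have h1 : f y = 0 := hyroot
    have h2 : f δ = 0 := hδroot
    simp only [hf] at h1 h2
    linear_combination h1 - h2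
  have hpos : (h : ℝ) * ((h : ℝ) + 1) * (y + δ) - 2 * (n : ℝ) * (h : ℝ) > 0 := by
    have h1 : (n : ℝ) < ((h : ℝ) + 1) * δ := by
      have := (div_lt_iff₀ (by positivity : (0:ℝ) < (h : ℝ) + 1)).mp hxv
      linarith
    have h2 : (n : ℝ) < ((h : ℝ) + 1) * y := by
      have := (div_lt_iff₀ (by positivity : (0:ℝ) < (h : ℝ) + 1)).mp hyv
      linarith
    nlinarith
  have : y - δ = 0 := by
    rcases mul_eq_zero.mp key with h' | h'
    · exact h'
    · linarith
  linarith
end
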